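/- arXiv:2109.14356 — 3 statements merged into one kernel-verified Lean document; each statement's English description precedes it below -/
import Mathlib

section
/- Let X₁, …, Xₙ be independent Poisson trials, X = ∑ᵢ Xᵢ, μ = E[X] > 0. Fix a tail probability γ with 0 < γ < 1 and set β = (log γ)/μ and δ_L = 3·(β + √(β² - 2β(9 - β)))/(9 - β). Then P(X ≤ (1-δ_L)μ) < γ. -/
/-!
For `t ≤ 0`, the exponential Markov inequality together with
`E[exp (t Xᵢ)] = 1 + (eᵗ - 1) pᵢ ≤ exp ((eᵗ - 1) pᵢ)` gives
`P(X ≤ (1 - δ) μ) ≤ exp (μ (eᵗ - 1 - t (1 - δ)))`. The number `δ_L` is the positive root of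
`(9 - β) δ² - 6 β δ + 18 β = 0`, i.e. `β = -9 δ² / (18 - 6 δ - δ²)`, so it suffices to find `t ≤ 0`
with `eᵗ - 1 - t (1 - δ_L) < β`. For `δ_L < 1` the optimal `t = log (1 - δ_L)` works because
Simpson's rule overestimates `-log (1 - δ_L)`; for `δ_L ≥ 1` a sufficiently negative `t` works.
-/

open MeasureTheory ProbabilityTheory Real

-- Simpson's rule for `-log x = ∫ₓ¹ dy / y`, which overestimates because `1 / y` has positive
-- fourth derivative.
lemma simpson_lt_log {x : ℝ} (hx0 : 0 < x) (hx1 : x < 1) :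
    (x - 1) / 6 + 4 * (x - 1) / (3 * (x + 1)) + (x - 1) / (6 * x) < log x := by
  set f : ℝ → ℝ := fun y => log y - ((y - 1) / 6 + 4 * (y - 1) / (3 * (y + 1)) + (y - 1) / (6 * y))
  have hf' : ∀ y, 0 < y → HasDerivAt f (-((y - 1) ^ 4 / (6 * y ^ 2 * (y + 1) ^ 2))) y := by
    intro y hy
    have hy1 : y + 1 ≠ 0 := by positivity
    refine ((hasDerivAt_log hy.ne').sub (((((hasDerivAt_id' y).sub_const 1).div_const 6).add
      ((((hasDerivAt_id' y).sub_const 1).const_mul 4).div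
        (((hasDerivAt_id' y).add_const 1).const_mul 3) (by positivity))).add
      (((hasDerivAt_id' y).sub_const 1).div ((hasDerivAt_id' y).const_mul 6)
        (by positivity)))).congr_deriv ?_
    field_simp
    ring
  have hanti : StrictAntiOn f (Set.Ioc 0 1) := by
    refine strictAntiOn_of_hasDerivWithinAt_neg (convex_Ioc 0 1)
      (fun y hy => (hf' y hy.1).continuousAt.continuousWithinAt)
      (fun y hy => (hf' y ?_).hasDerivWithinAt) (fun y hy => ?_)
    all_goals rw [interior_Ioc] at hy
    · exact hy.1
    · have hy0 : 0 < y := hy.1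
      have hy1 : y - 1 ≠ 0 := by linarith [hy.2]
      have : 0 < (y - 1) ^ 4 / (6 * y ^ 2 * (y + 1) ^ 2) := by positivity
      linarith
  have := hanti ⟨hx0, hx1.le⟩ ⟨one_pos, le_rfl⟩ hx1
  simp only [f, log_one] at this
  linarith

lemma neg_sub_mul_log_one_sub_lt {δ : ℝ} (hδ0 : 0 < δ) (hδ1 : δ < 1) :
    -δ - (1 - δ) * log (1 - δ) < -(9 * δ ^ 2) / (18 - 6 * δ - δ ^ 2) := by
  have hx0 : 0 < 1 - δ := by linarith
  have hsimpson := mul_lt_mul_of_pos_left (simpson_lt_log hx0 (by linarith)) hx0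
  have hD : 0 < 18 - 6 * δ - δ ^ 2 := by nlinarith
  have h2 : 0 < 2 - δ := by linarith
  have hD' := hD.ne'
  have h2' := h2.ne'
  have hx0' := hx0.ne'
  have hslack : -δ - (1 - δ) * ((1 - δ - 1) / 6 + 4 * (1 - δ - 1) / (3 * (1 - δ + 1))
      + (1 - δ - 1) / (6 * (1 - δ))) + δ ^ 5 / (6 * (2 - δ) * (18 - 6 * δ - δ ^ 2))
      = -(9 * δ ^ 2) / (18 - 6 * δ - δ ^ 2) := by
    set D := 18 - 6 * δ - δ ^ 2 with hD_def
    field_simp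
    rw [hD_def]
    ring
  have : 0 ≤ δ ^ 5 / (6 * (2 - δ) * (18 - 6 * δ - δ ^ 2)) := by positivity
  linarith

lemma pos_and_root_of_eq_quadratic_formula {β δ : ℝ} (hβ : β < 0)
    (hδ : δ = 3 * ((β + √(β ^ 2 - 2 * β * (9 - β))) / (9 - β))) :
    0 < δ ∧ 9 * δ ^ 2 = β * (δ ^ 2 + 6 * δ - 18) := by
  have h9β : 0 < 9 - β := by linarith
  have hdisc : 0 ≤ β ^ 2 - 2 * β * (9 - β) := by nlinarith
  set s := √(β ^ 2 - 2 * β * (9 - β))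
  have hs : s ^ 2 = β ^ 2 - 2 * β * (9 - β) := sq_sqrt hdisc
  have hβs : 0 < β + s := by nlinarith [sqrt_nonneg (β ^ 2 - 2 * β * (9 - β))]
  have hδs : δ * (9 - β) - 3 * β = 3 * s := by
    rw [hδ]
    field_simp
    ring
  refine ⟨by rw [hδ]; positivity, ?_⟩
  have hroot : (9 - β) * (9 * δ ^ 2 - β * (δ ^ 2 + 6 * δ - 18)) = 0 := by
    linear_combination (δ * (9 - β) - 3 * β + 3 * s) * hδs + 9 * hs
  linarith [(mul_eq_zero.mp hroot).resolve_left h9β.ne']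

lemma exists_exp_sub_one_sub_mul_lt {β δ : ℝ} (hβ : β < 0) (hδ : 0 < δ)
    (hβδ : 9 * δ ^ 2 = β * (δ ^ 2 + 6 * δ - 18)) :
    ∃ t ≤ 0, exp t - 1 - t * (1 - δ) < β := by
  rcases lt_trichotomy δ 1 with hδ1 | rfl | hδ1
  · have hD : 0 < 18 - 6 * δ - δ ^ 2 := by nlinarith
    refine ⟨log (1 - δ), (log_neg (by linarith) (by linarith)).le, ?_⟩
    rw [exp_log (by linarith), show β = -(9 * δ ^ 2) / (18 - 6 * δ - δ ^ 2) by
      rw [eq_div_iff hD.ne']; linarith]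
    linarith [neg_sub_mul_log_one_sub_lt hδ hδ1]
  · refine ⟨-2, by norm_num, ?_⟩
    have hβ : β = -9 / 11 := by linarith
    have : exp (-2) < 2 / 11 := by
      rw [show (-2 : ℝ) = -1 + -1 by norm_num, exp_add]
      nlinarith [exp_neg_one_lt_d9, exp_pos (-1)]
    rw [hβ]
    linarith
  · refine ⟨β / (δ - 1), (div_neg_of_neg_of_pos hβ (by linarith)).le, ?_⟩
    have : exp (β / (δ - 1)) < 1 := exp_lt_one_iff.mpr (div_neg_of_neg_of_pos hβ (by linarith))
    have : β / (δ - 1) * (1 - δ) = -β := by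
      field_simp
      ring
    linarith

section PoissonTrials

variable {Ω ι : Type*} [MeasurableSpace Ω] {μ : Measure Ω} [IsProbabilityMeasure μ]

lemma integrable_of_zero_or_one {Y : Ω → ℝ} (hY : Measurable Y) (h01 : ∀ ω, Y ω = 0 ∨ Y ω = 1) :
    Integrable Y μ :=
  .of_bound hY.aestronglyMeasurable 1 <| .of_forall fun ω => by rcases h01 ω with h | h <;> simp [h]

lemma mgf_of_zero_or_one {Y : Ω → ℝ} (hY : Measurable Y) (h01 : ∀ ω, Y ω = 0 ∨ Y ω = 1) (t : ℝ) :
    mgf Y μ t = 1 + (exp t - 1) * μ[Y] := by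
  have hlin : ∀ ω, exp (t * Y ω) = 1 + (exp t - 1) * Y ω := fun ω => by
    rcases h01 ω with h | h <;> simp [h]
  simp only [mgf, hlin]
  rw [integral_add (integrable_const 1) ((integrable_of_zero_or_one hY h01).const_mul _),
    integral_const_mul]
  simp

lemma mgf_sum_le_exp_of_zero_or_one {X : ι → Ω → ℝ} (hindep : iIndepFun X μ)
    (hmeas : ∀ i, Measurable (X i)) (h01 : ∀ i ω, X i ω = 0 ∨ X i ω = 1) (s : Finset ι) (t : ℝ) :
    mgf (fun ω => ∑ i ∈ s, X i ω) μ t ≤ exp ((exp t - 1) * ∫ ω, ∑ i ∈ s, X i ω ∂μ) := by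
  rw [integral_finsetSum s fun i _ => integrable_of_zero_or_one (hmeas i) (h01 i), Finset.mul_sum,
    exp_sum, ← Finset.sum_fn, hindep.mgf_sum hmeas]
  refine Finset.prod_le_prod (fun i _ => mgf_nonneg) fun i _ => ?_
  rw [mgf_of_zero_or_one (hmeas i) (h01 i)]
  linarith [add_one_le_exp ((exp t - 1) * μ[X i])]

lemma measureReal_sum_le_le_of_zero_or_one {X : ι → Ω → ℝ} (hindep : iIndepFun X μ)
    (hmeas : ∀ i, Measurable (X i)) (h01 : ∀ i ω, X i ω = 0 ∨ X i ω = 1) (s : Finset ι)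
    {t : ℝ} (ht : t ≤ 0) (a : ℝ) :
    μ.real {ω | ∑ i ∈ s, X i ω ≤ a} ≤
      exp (-t * a + (exp t - 1) * ∫ ω, ∑ i ∈ s, X i ω ∂μ) := by
  have hS : ∀ ω, 0 ≤ ∑ i ∈ s, X i ω := fun ω =>
    Finset.sum_nonneg fun i _ => by rcases h01 i ω with h | h <;> simp [h]
  have hint : Integrable (fun ω => exp (t * ∑ i ∈ s, X i ω)) μ :=
    .of_bound (by fun_prop) 1 <| .of_forall fun ω => by
      rw [norm_of_nonneg (exp_nonneg _), exp_le_one_iff]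
      exact mul_nonpos_of_nonpos_of_nonneg ht (hS ω)
  calc μ.real {ω | ∑ i ∈ s, X i ω ≤ a}
      ≤ exp (-t * a) * mgf (fun ω => ∑ i ∈ s, X i ω) μ t := measure_le_le_exp_mul_mgf a ht hint
    _ ≤ exp (-t * a) * exp ((exp t - 1) * ∫ ω, ∑ i ∈ s, X i ω ∂μ) :=
        mul_le_mul_of_nonneg_left (mgf_sum_le_exp_of_zero_or_one hindep hmeas h01 s t)
          (exp_nonneg _)
    _ = _ := (exp_add _ _).symm

end PoissonTrials

theorem chernoff_lower_quadratic_general {Ω : Type*} [MeasureSpace Ω]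
    [IsProbabilityMeasure (ℙ : Measure Ω)]
    (n : ℕ) (X : Fin n → Ω → ℝ)
    (hmeas : ∀ i, Measurable (X i))
    (hindep : iIndepFun X ℙ)
    (h01 : ∀ i ω, X i ω = 0 ∨ X i ω = 1)
    (μ : ℝ) (hμ : μ = ∫ ω, (∑ i, X i ω) ∂ℙ) (hμpos : 0 < μ)
    (γ : ℝ) (hγ0 : 0 < γ) (hγ1 : γ < 1)
    (β δL : ℝ) (hβ : β = Real.log γ / μ)
    (hδL : δL = 3 * ((β + Real.sqrt (β ^ 2 - 2 * β * (9 - β))) / (9 - β))) :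
    (ℙ {ω | ∑ i, X i ω ≤ (1 - δL) * μ}).toReal < γ := by
  have hβneg : β < 0 := hβ ▸ div_neg_of_neg_of_pos (log_neg hγ0 hγ1) hμpos
  obtain ⟨hδpos, hδroot⟩ := pos_and_root_of_eq_quadratic_formula hβneg hδL
  obtain ⟨t, ht, hexponent⟩ := exists_exp_sub_one_sub_mul_lt hβneg hδpos hδroot
  calc (ℙ {ω | ∑ i, X i ω ≤ (1 - δL) * μ}).toReal
      ≤ exp (-t * ((1 - δL) * μ) + (exp t - 1) * μ) :=
        hμ ▸ measureReal_sum_le_le_of_zero_or_one hindep hmeas h01 Finset.univ ht _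
    _ < exp (β * μ) := by
        rw [exp_lt_exp]
        linarith [mul_lt_mul_of_pos_right hexponent hμpos]
    _ = γ := by rw [hβ, div_mul_cancel₀ _ hμpos.ne', exp_log hγ0]

theorem chernoff_lower_quadratic {Ω : Type*} [MeasureSpace Ω]
    [IsProbabilityMeasure (ℙ : Measure Ω)]
    (n : ℕ) (X : Fin n → Ω → ℝ) (p : Fin n → ℝ)
    (hmeas : ∀ i, Measurable (X i))
    (hindep : iIndepFun X ℙ)
    (h01 : ∀ i ω, X i ω = 0 ∨ X i ω = 1)
    (hp : ∀ i, (ℙ {ω | X i ω = 1}).toReal = p i)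
    (μ : ℝ) (hμ : μ = ∫ ω, (∑ i, X i ω) ∂ℙ) (hμpos : 0 < μ)
    (γ : ℝ) (hγ0 : 0 < γ) (hγ1 : γ < 1)
    (β δL : ℝ) (hβ : β = Real.log γ / μ)
    (hδL : δL = 3 * ((β + Real.sqrt (β ^ 2 - 2 * β * (9 - β))) / (9 - β))) :
    (ℙ {ω | ∑ i, X i ω ≤ (1 - δL) * μ}).toReal < γ :=
  chernoff_lower_quadratic_general n X hmeas hindep h01 μ hμ hμpos γ hγ0 hγ1 β δL hβ hδL
end

section
/- Let X₁, …, Xₙ be independent Poisson trials, X = ∑ᵢ Xᵢ, μ = E[X]. Then for every real δ with 0 < δ < 1, P(X ≥ μ/(1-δ)) ≤ exp( ((δ + log(1-δ))/(1-δ)) · μ ). -/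
open MeasureTheory ProbabilityTheory

/-!
For a `{0,1}`-valued `X`, `exp (t * X) = 1 + (exp t - 1) * X`, so its moment generating function is
`1 + (exp t - 1) * E[X] ≤ exp ((exp t - 1) * E[X])`. By independence the moment generating function
of the sum is at most `exp ((exp t - 1) * μ)`, and the Chernoff bound `P(S ≥ a) ≤ exp (-t a) E[exp (t S)]`
with `t = -log (1 - δ)`, i.e. `exp t = 1 / (1 - δ)`, turns into the stated exponent.
-/

open Real

section ZeroOrOne

variable {Ω : Type*} [MeasurableSpace Ω] {μ : Measure Ω}

lemma exp_mul_eq_of_zero_or_one {x : ℝ} (hx : x = 0 ∨ x = 1) (t : ℝ) :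
    exp (t * x) = 1 + (exp t - 1) * x := by
  rcases hx with rfl | rfl <;> simp

variable {X : Ω → ℝ}

lemma integrable_of_zero_or_one_s9 [IsFiniteMeasure μ] (hX : AEStronglyMeasurable X μ)
    (h01 : ∀ ω, X ω = 0 ∨ X ω = 1) : Integrable X μ :=
  .of_bound hX 1 (ae_of_all _ fun ω ↦ by rcases h01 ω with h | h <;> simp [h])

lemma integrable_exp_mul_of_zero_or_one [IsFiniteMeasure μ] (hX : AEStronglyMeasurable X μ)
    (h01 : ∀ ω, X ω = 0 ∨ X ω = 1) (t : ℝ) : Integrable (fun ω ↦ exp (t * X ω)) μ := by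
  simp_rw [exp_mul_eq_of_zero_or_one (h01 _)]
  exact (integrable_const 1).add ((integrable_of_zero_or_one_s9 hX h01).const_mul _)

lemma mgf_eq_of_zero_or_one [IsProbabilityMeasure μ] (hX : AEStronglyMeasurable X μ)
    (h01 : ∀ ω, X ω = 0 ∨ X ω = 1) (t : ℝ) :
    mgf X μ t = 1 + (exp t - 1) * μ[X] := by
  simp_rw [mgf, exp_mul_eq_of_zero_or_one (h01 _)]
  rw [integral_add (integrable_const 1) ((integrable_of_zero_or_one_s9 hX h01).const_mul _),
    integral_const_mul]
  simp

lemma mgf_le_exp_of_zero_or_one [IsProbabilityMeasure μ] (hX : AEStronglyMeasurable X μ)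
    (h01 : ∀ ω, X ω = 0 ∨ X ω = 1) (t : ℝ) :
    mgf X μ t ≤ exp ((exp t - 1) * μ[X]) := by
  rw [mgf_eq_of_zero_or_one hX h01]
  linarith [add_one_le_exp ((exp t - 1) * μ[X])]

end ZeroOrOne

namespace ProbabilityTheory

variable {Ω ι : Type*} [MeasurableSpace Ω] {μ : Measure Ω} [IsProbabilityMeasure μ]
  {X : ι → Ω → ℝ}

lemma iIndepFun.mgf_sum_le_of_zero_or_one (hindep : iIndepFun X μ)
    (hmeas : ∀ i, Measurable (X i)) (h01 : ∀ i ω, X i ω = 0 ∨ X i ω = 1) (s : Finset ι)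
    (t : ℝ) :
    mgf (fun ω ↦ ∑ i ∈ s, X i ω) μ t ≤ exp ((exp t - 1) * ∫ ω, ∑ i ∈ s, X i ω ∂μ) := by
  have hint i : Integrable (X i) μ :=
    integrable_of_zero_or_one_s9 (hmeas i).aestronglyMeasurable (h01 i)
  rw [integral_finsetSum s fun i _ ↦ hint i, Finset.mul_sum, exp_sum]
  simp_rw [← Finset.sum_apply]
  rw [hindep.mgf_sum hmeas]
  exact Finset.prod_le_prod (fun i _ ↦ mgf_nonneg)
    fun i _ ↦ mgf_le_exp_of_zero_or_one (hmeas i).aestronglyMeasurable (h01 i) t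

lemma iIndepFun.measure_sum_ge_le_of_zero_or_one (hindep : iIndepFun X μ)
    (hmeas : ∀ i, Measurable (X i)) (h01 : ∀ i ω, X i ω = 0 ∨ X i ω = 1) (s : Finset ι)
    {t : ℝ} (ht : 0 ≤ t) (a : ℝ) :
    μ.real {ω | a ≤ ∑ i ∈ s, X i ω} ≤
      exp (-t * a + (exp t - 1) * ∫ ω, ∑ i ∈ s, X i ω ∂μ) := by
  have hint : Integrable (fun ω ↦ exp (t * ∑ i ∈ s, X i ω)) μ := by
    simpa [Finset.sum_apply] using hindep.integrable_exp_mul_sum hmeas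
      fun i _ ↦ integrable_exp_mul_of_zero_or_one (hmeas i).aestronglyMeasurable (h01 i) t
  calc μ.real {ω | a ≤ ∑ i ∈ s, X i ω}
      ≤ exp (-t * a) * mgf (fun ω ↦ ∑ i ∈ s, X i ω) μ t := measure_ge_le_exp_mul_mgf a ht hint
    _ ≤ exp (-t * a) * exp ((exp t - 1) * ∫ ω, ∑ i ∈ s, X i ω ∂μ) :=
        mul_le_mul_of_nonneg_left (hindep.mgf_sum_le_of_zero_or_one hmeas h01 s t) (exp_pos _).le
    _ = _ := (exp_add _ _).symm

end ProbabilityTheory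

theorem chernoff_regression_upper_general {Ω : Type*} [MeasureSpace Ω]
    [IsProbabilityMeasure (ℙ : Measure Ω)]
    (n : ℕ) (X : Fin n → Ω → ℝ)
    (hmeas : ∀ i, Measurable (X i))
    (hindep : iIndepFun X ℙ)
    (h01 : ∀ i ω, X i ω = 0 ∨ X i ω = 1)
    (μ : ℝ) (hμ : μ = ∫ ω, (∑ i, X i ω) ∂ℙ)
    (δ : ℝ) (hδ0 : 0 < δ) (hδ1 : δ < 1) :
    (ℙ {ω | μ / (1 - δ) ≤ ∑ i, X i ω}).toReal ≤
      Real.exp ((δ + Real.log (1 - δ)) / (1 - δ) * μ) := by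
  have h1δ : 0 < 1 - δ := by linarith
  have ht : 0 ≤ -log (1 - δ) := neg_nonneg.2 (log_nonpos h1δ.le (by linarith))
  have hexp : exp (-log (1 - δ)) = (1 - δ)⁻¹ := by rw [exp_neg, exp_log h1δ]
  calc (ℙ {ω | μ / (1 - δ) ≤ ∑ i, X i ω}).toReal
      ≤ exp (-(-log (1 - δ)) * (μ / (1 - δ)) + (exp (-log (1 - δ)) - 1) * μ) := by
        rw [hμ]
        exact hindep.measure_sum_ge_le_of_zero_or_one hmeas h01 _ ht _
    _ = exp ((δ + log (1 - δ)) / (1 - δ) * μ) := by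
        rw [hexp]
        field_simp
        ring_nf

theorem chernoff_regression_upper {Ω : Type*} [MeasureSpace Ω]
    [IsProbabilityMeasure (ℙ : Measure Ω)]
    (n : ℕ) (X : Fin n → Ω → ℝ) (p : Fin n → ℝ)
    (hmeas : ∀ i, Measurable (X i))
    (hindep : iIndepFun X ℙ)
    (h01 : ∀ i ω, X i ω = 0 ∨ X i ω = 1)
    (hp : ∀ i, (ℙ {ω | X i ω = 1}).toReal = p i)
    (μ : ℝ) (hμ : μ = ∫ ω, (∑ i, X i ω) ∂ℙ)
    (δ : ℝ) (hδ0 : 0 < δ) (hδ1 : δ < 1) :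
    (ℙ {ω | μ / (1 - δ) ≤ ∑ i, X i ω}).toReal ≤
      Real.exp ((δ + Real.log (1 - δ)) / (1 - δ) * μ) :=
  chernoff_regression_upper_general n X hmeas hindep h01 μ hμ δ hδ0 hδ1
end

section
/- Let X₁, …, Xₙ be independent Poisson trials, X = ∑ᵢ Xᵢ. Let 0 < γ < 1, let μ̂ > 0 be a real number, set β = (log γ)/μ̂ and δ_L = (6β + √(36β² - 18β(9-β)))/(9-β). If E[X] ≤ (1-δ_L)·μ̂, then P(X ≥ μ̂) ≤ γ. -/
/-!
Chernoff's method: for `t ≥ 0`, `P(X ≥ a) ≤ exp (-t a + (eᵗ - 1) E[X])`, because a `{0,1}`-valued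
variable has `E[exp (t Xᵢ)] = 1 + (eᵗ - 1) E[Xᵢ] ≤ exp ((eᵗ - 1) E[Xᵢ])`. If `E[X] ≤ (1 - δ) a` with
`0 ≤ δ < 1`, the choice `t = -log (1 - δ)` gives `P(X ≥ a) ≤ exp ((δ + log (1 - δ)) a)`.
The number `δ_L` is the nonnegative root of `9 δ² = β (δ² + 12 δ - 18)`, and
`δ + log (1 - δ) ≤ 9 δ² / (δ² + 12 δ - 18)` on `[0, 1)`, so the exponent is at most `β a = log γ`.
When `δ_L ≥ 1` the mean vanishes and `t = -β` suffices.
-/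

open MeasureTheory ProbabilityTheory Real

lemma hasDerivAt_div_sub_add_log_one_sub {x : ℝ} (hQ : x ^ 2 + 12 * x - 18 ≠ 0) (hx : x ≠ 1) :
    HasDerivAt (fun x => 9 * x ^ 2 / (x ^ 2 + 12 * x - 18) - (x + log (1 - x)))
      (x / (1 - x) - 108 * x * (3 - x) / (x ^ 2 + 12 * x - 18) ^ 2) x := by
  have h1x : 1 - x ≠ 0 := sub_ne_zero.2 hx.symm
  have hnum : HasDerivAt (fun x => 9 * x ^ 2) (9 * (2 * x)) x := by
    simpa using (hasDerivAt_pow 2 x).const_mul 9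
  have hden : HasDerivAt (fun x => x ^ 2 + 12 * x - 18) (2 * x + 12) x := by
    simpa using (((hasDerivAt_pow 2 x).add ((hasDerivAt_id x).const_mul 12)).sub_const 18)
  have hlog : HasDerivAt (fun x => log (1 - x)) (-1 / (1 - x)) x := by
    simpa using ((hasDerivAt_id x).const_sub 1).log h1x
  refine ((hnum.div hden hQ).sub ((hasDerivAt_id x).add hlog)).congr_deriv ?_
  field_simp
  ring

lemma add_log_one_sub_le_div {x : ℝ} (hx0 : 0 ≤ x) (hx1 : x < 1) :
    x + log (1 - x) ≤ 9 * x ^ 2 / (x ^ 2 + 12 * x - 18) := by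
  have hQ {y : ℝ} (hy : y ∈ Set.Ico (0 : ℝ) 1) : y ^ 2 + 12 * y - 18 < 0 := by
    nlinarith [hy.1, hy.2]
  have hderiv {y : ℝ} (hy : y ∈ Set.Ico (0 : ℝ) 1) :=
    hasDerivAt_div_sub_add_log_one_sub (hQ hy).ne hy.2.ne
  have hmono := monotoneOn_of_hasDerivWithinAt_nonneg (convex_Ico 0 1)
    (fun y hy => (hderiv hy).continuousAt.continuousWithinAt)
    (fun y hy => (hderiv (interior_subset hy)).hasDerivWithinAt) fun y hy => by
      rw [interior_Ico] at hy
      obtain ⟨hy0, hy1⟩ := hy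
      have hQ' := hQ ⟨hy0.le, hy1⟩
      rw [sub_nonneg, div_le_div_iff₀ (sq_pos_of_neg hQ') (by linarith)]
      -- `(y² + 12 y - 18)² - 108 (3 - y) (1 - y) = y³ (y + 24)`
      nlinarith [mul_nonneg (pow_nonneg hy0.le 3) (by linarith : 0 ≤ y + 24)]
  simpa [sub_nonneg] using hmono ⟨le_rfl, one_pos⟩ ⟨hx0, hx1⟩ hx0

noncomputable def lowerDelta (β : ℝ) : ℝ := (6 * β + √(36 * β ^ 2 - 18 * β * (9 - β))) / (9 - β)

lemma lowerDelta_nonneg {β : ℝ} (hβ : β ≤ 0) : 0 ≤ lowerDelta β := by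
  have hΔ : (6 * β) ^ 2 ≤ 36 * β ^ 2 - 18 * β * (9 - β) := by nlinarith
  have hs : -(6 * β) ≤ √(36 * β ^ 2 - 18 * β * (9 - β)) :=
    (neg_le_abs _).trans (Real.abs_le_sqrt hΔ)
  exact div_nonneg (by linarith) (by linarith)

lemma lowerDelta_sq_eq {β : ℝ} (hβ : β ≤ 0) :
    9 * lowerDelta β ^ 2 = β * (lowerDelta β ^ 2 + 12 * lowerDelta β - 18) := by
  set δ := lowerDelta β with hδ
  have h9β : 9 - β ≠ 0 := by linarith
  have hs : δ * (9 - β) - 6 * β = √(36 * β ^ 2 - 18 * β * (9 - β)) := by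
    rw [hδ, lowerDelta]; field_simp; ring
  have hsq : (δ * (9 - β) - 6 * β) ^ 2 = 36 * β ^ 2 - 18 * β * (9 - β) := by
    rw [hs]; exact Real.sq_sqrt (by nlinarith)
  have h : (9 - β) * (9 * δ ^ 2 - β * (δ ^ 2 + 12 * δ - 18)) = 0 := by linear_combination hsq
  linarith [(mul_eq_zero.1 h).resolve_left h9β]

lemma lowerDelta_add_log_one_sub_le {β : ℝ} (hβ : β ≤ 0) (h1 : lowerDelta β < 1) :
    lowerDelta β + log (1 - lowerDelta β) ≤ β := by
  have h0 := lowerDelta_nonneg hβ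
  have hQ : lowerDelta β ^ 2 + 12 * lowerDelta β - 18 < 0 := by nlinarith
  calc lowerDelta β + log (1 - lowerDelta β)
      ≤ 9 * lowerDelta β ^ 2 / (lowerDelta β ^ 2 + 12 * lowerDelta β - 18) :=
        add_log_one_sub_le_div h0 h1
    _ = β := by rw [div_eq_iff hQ.ne, lowerDelta_sq_eq hβ]

lemma exp_mul_eq_of_eq_zero_or_eq_one {y : ℝ} (hy : y = 0 ∨ y = 1) (t : ℝ) :
    exp (t * y) = 1 + (exp t - 1) * y := by
  rcases hy with rfl | rfl <;> simp

namespace ProbabilityTheory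

variable {Ω ι : Type*} [MeasurableSpace Ω] {μ : Measure Ω}

lemma integrable_of_forall_eq_zero_or_eq_one [IsFiniteMeasure μ] {Y : Ω → ℝ} (hY : Measurable Y)
    (h01 : ∀ ω, Y ω = 0 ∨ Y ω = 1) : Integrable Y μ :=
  (integrable_const 1).mono' hY.aestronglyMeasurable <| ae_of_all _ fun ω => by
    rcases h01 ω with h | h <;> simp [h]

lemma integrable_exp_mul_of_forall_eq_zero_or_eq_one [IsFiniteMeasure μ] {Y : Ω → ℝ}
    (hY : Measurable Y) (h01 : ∀ ω, Y ω = 0 ∨ Y ω = 1) (t : ℝ) :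
    Integrable (fun ω => exp (t * Y ω)) μ := by
  simp_rw [exp_mul_eq_of_eq_zero_or_eq_one (h01 _)]
  exact (integrable_const 1).add ((integrable_of_forall_eq_zero_or_eq_one hY h01).const_mul _)

variable [IsProbabilityMeasure μ]

lemma mgf_eq_of_forall_eq_zero_or_eq_one {Y : Ω → ℝ} (hY : Measurable Y)
    (h01 : ∀ ω, Y ω = 0 ∨ Y ω = 1) (t : ℝ) :
    mgf Y μ t = 1 + (exp t - 1) * μ[Y] := by
  simp_rw [mgf, exp_mul_eq_of_eq_zero_or_eq_one (h01 _)]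
  rw [integral_add (integrable_const 1)
    ((integrable_of_forall_eq_zero_or_eq_one hY h01).const_mul _), integral_const_mul]
  simp

lemma mgf_le_exp_of_forall_eq_zero_or_eq_one {Y : Ω → ℝ} (hY : Measurable Y)
    (h01 : ∀ ω, Y ω = 0 ∨ Y ω = 1) (t : ℝ) :
    mgf Y μ t ≤ exp ((exp t - 1) * μ[Y]) := by
  rw [mgf_eq_of_forall_eq_zero_or_eq_one hY h01]
  linarith [add_one_le_exp ((exp t - 1) * μ[Y])]

variable [Fintype ι] {X : ι → Ω → ℝ}

lemma iIndepFun.mgf_sum_le_exp (hindep : iIndepFun X μ) (hmeas : ∀ i, Measurable (X i))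
    (h01 : ∀ i ω, X i ω = 0 ∨ X i ω = 1) (t : ℝ) :
    mgf (∑ i, X i) μ t ≤ exp ((exp t - 1) * ∫ ω, ∑ i, X i ω ∂μ) := by
  have hint i := integrable_of_forall_eq_zero_or_eq_one (μ := μ) (hmeas i) (h01 i)
  calc mgf (∑ i, X i) μ t = ∏ i, mgf (X i) μ t := hindep.mgf_sum hmeas Finset.univ
    _ ≤ ∏ i, exp ((exp t - 1) * μ[X i]) := Finset.prod_le_prod (fun i _ => mgf_nonneg)
        fun i _ => mgf_le_exp_of_forall_eq_zero_or_eq_one (hmeas i) (h01 i) t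
    _ = exp ((exp t - 1) * ∫ ω, ∑ i, X i ω ∂μ) := by
        rw [← exp_sum, ← Finset.mul_sum, integral_finsetSum _ fun i _ => hint i]

lemma iIndepFun.measureReal_sum_ge_le_exp (hindep : iIndepFun X μ)
    (hmeas : ∀ i, Measurable (X i)) (h01 : ∀ i ω, X i ω = 0 ∨ X i ω = 1) (a : ℝ) {t : ℝ}
    (ht : 0 ≤ t) :
    μ.real {ω | a ≤ ∑ i, X i ω} ≤ exp (-t * a + (exp t - 1) * ∫ ω, ∑ i, X i ω ∂μ) := by
  have hexp_int : Integrable (fun ω => exp (t * (∑ i, X i) ω)) μ :=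
    hindep.integrable_exp_mul_sum hmeas fun i _ =>
      integrable_exp_mul_of_forall_eq_zero_or_eq_one (hmeas i) (h01 i) t
  have hset : {ω | a ≤ ∑ i, X i ω} = {ω | a ≤ (∑ i, X i) ω} := by simp [Finset.sum_apply]
  calc μ.real {ω | a ≤ ∑ i, X i ω} ≤ exp (-t * a) * mgf (∑ i, X i) μ t :=
        hset ▸ measure_ge_le_exp_mul_mgf a ht hexp_int
    _ ≤ exp (-t * a) * exp ((exp t - 1) * ∫ ω, ∑ i, X i ω ∂μ) := by
        gcongr; exact hindep.mgf_sum_le_exp hmeas h01 t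
    _ = exp (-t * a + (exp t - 1) * ∫ ω, ∑ i, X i ω ∂μ) := (exp_add _ _).symm

lemma iIndepFun.measureReal_sum_ge_le_exp_of_integral_le (hindep : iIndepFun X μ)
    (hmeas : ∀ i, Measurable (X i)) (h01 : ∀ i ω, X i ω = 0 ∨ X i ω = 1) {a δ : ℝ}
    (hδ0 : 0 ≤ δ) (hδ1 : δ < 1) (hE : ∫ ω, ∑ i, X i ω ∂μ ≤ (1 - δ) * a) :
    μ.real {ω | a ≤ ∑ i, X i ω} ≤ exp ((δ + log (1 - δ)) * a) := by
  have h1δ : 0 < 1 - δ := by linarith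
  have hexp : exp (-log (1 - δ)) - 1 = δ / (1 - δ) := by
    rw [exp_neg, exp_log h1δ]; field_simp; ring
  refine (hindep.measureReal_sum_ge_le_exp hmeas h01 a
    (neg_nonneg.2 (log_nonpos h1δ.le (by linarith)))).trans (exp_le_exp.2 ?_)
  have : δ / (1 - δ) * ∫ ω, ∑ i, X i ω ∂μ ≤ δ * a := by
    calc δ / (1 - δ) * ∫ ω, ∑ i, X i ω ∂μ ≤ δ / (1 - δ) * ((1 - δ) * a) := by gcongr
      _ = δ * a := by field_simp
  rw [hexp]
  linarith

end ProbabilityTheory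

theorem conf_lower_bound_general {Ω : Type*} [MeasureSpace Ω]
    [IsProbabilityMeasure (ℙ : Measure Ω)]
    (n : ℕ) (X : Fin n → Ω → ℝ)
    (hmeas : ∀ i, Measurable (X i))
    (hindep : iIndepFun X ℙ)
    (h01 : ∀ i ω, X i ω = 0 ∨ X i ω = 1)
    (γ μhat : ℝ) (hγ0 : 0 < γ) (hγ1 : γ < 1) (hμhat : 0 < μhat)
    (β δL : ℝ) (hβ : β = Real.log γ / μhat)
    (hδL : δL = (6 * β + Real.sqrt (36 * β ^ 2 - 18 * β * (9 - β))) / (9 - β))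
    (hE : ∫ ω, (∑ i, X i ω) ∂ℙ ≤ (1 - δL) * μhat) :
    (ℙ {ω | μhat ≤ ∑ i, X i ω}).toReal ≤ γ := by
  have hβ0 : β ≤ 0 := hβ ▸ div_nonpos_of_nonpos_of_nonneg (log_nonpos hγ0.le hγ1.le) hμhat.le
  have hγ : γ = exp (β * μhat) := by rw [hβ, div_mul_cancel₀ _ hμhat.ne', exp_log hγ0]
  rw [← measureReal_def, hγ]
  change δL = lowerDelta β at hδL
  subst hδL
  rcases lt_or_ge (lowerDelta β) 1 with hδ1 | hδ1
  · calc _ ≤ exp ((lowerDelta β + log (1 - lowerDelta β)) * μhat) :=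
          hindep.measureReal_sum_ge_le_exp_of_integral_le hmeas h01 (lowerDelta_nonneg hβ0) hδ1 hE
      _ ≤ exp (β * μhat) := by gcongr; exact lowerDelta_add_log_one_sub_le hβ0 hδ1
  · -- the mean vanishes, and Chernoff's bound with `t = -β` already gives `exp (β μ̂)`
    have hE0 : ∫ ω, ∑ i, X i ω ∂ℙ ≤ 0 :=
      hE.trans (mul_nonpos_of_nonpos_of_nonneg (by linarith) hμhat.le)
    have hexp : 0 ≤ exp (-β) - 1 := by linarith [one_le_exp (neg_nonneg.2 hβ0)]
    refine (hindep.measureReal_sum_ge_le_exp hmeas h01 μhat (neg_nonneg.2 hβ0)).trans ?_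
    gcongr
    linarith [mul_nonpos_of_nonneg_of_nonpos hexp hE0]

theorem conf_lower_bound {Ω : Type*} [MeasureSpace Ω]
    [IsProbabilityMeasure (ℙ : Measure Ω)]
    (n : ℕ) (X : Fin n → Ω → ℝ) (p : Fin n → ℝ)
    (hmeas : ∀ i, Measurable (X i))
    (hindep : iIndepFun X ℙ)
    (h01 : ∀ i ω, X i ω = 0 ∨ X i ω = 1)
    (hp : ∀ i, (ℙ {ω | X i ω = 1}).toReal = p i)
    (γ μhat : ℝ) (hγ0 : 0 < γ) (hγ1 : γ < 1) (hμhat : 0 < μhat)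
    (β δL : ℝ) (hβ : β = Real.log γ / μhat)
    (hδL : δL = (6 * β + Real.sqrt (36 * β ^ 2 - 18 * β * (9 - β))) / (9 - β))
    (hE : ∫ ω, (∑ i, X i ω) ∂ℙ ≤ (1 - δL) * μhat) :
    (ℙ {ω | μhat ≤ ∑ i, X i ω}).toReal ≤ γ :=
  conf_lower_bound_general n X hmeas hindep h01 γ μhat hγ0 hγ1 hμhat β δL hβ hδL hE
end
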